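/- Let X be a complex Banach space, A a bounded linear operator on X, 2 < α < 3 real, γ ∈ ℝ, λ a positive integer, (S_α(n))_{n ≥ −λ} the α-resolvent sequence generated by A, α, γ, λ, and h_α the scalar sequence of Definition 3.7. Then for every n ∈ ℕ, Δ^α(h_α * S_α)(n) = A∘(h_α * S_α)(n) + γ·(h_α * S_α^λ)(n), where S_α^λ(n) = S_α(n−λ). -/

import Mathlib

/-- The kernel `k^β(j) = Γ(β+j)/(Γ(β)Γ(j+1))`. -/
noncomputable def kker (β : ℝ) (j : ℕ) : ℝ :=
  Real.Gamma (β + j) / (Real.Gamma β * Real.Gamma (j + 1))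

/-- Finite convolution of a scalar sequence with a vector-valued sequence:
`(a*g)(n) = Σ_{j=0}^n a(n−j) • g(j)`. -/
noncomputable def conv {R M : Type*} [Semiring R] [AddCommMonoid M] [Module R M]
    (a : ℕ → R) (g : ℕ → M) (n : ℕ) : M :=
  ∑ j ∈ Finset.range (n + 1), a (n - j) • g j

/-- Forward difference `Δu(n) = u(n+1) − u(n)`. -/
def fdiff {M : Type*} [AddCommGroup M] (u : ℕ → M) (n : ℕ) : M := u (n + 1) - u n

/-- Riemann–Liouville fractional difference of order `α` (for `2 < α < 3`):
`Δ^α u(n) = Δ³ (k^{3−α} * u)(n)`. -/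
noncomputable def fracDiff {M : Type*} [AddCommGroup M] [Module ℝ M]
    (α : ℝ) (u : ℕ → M) (n : ℕ) : M :=
  fdiff (fdiff (fdiff (conv (kker (3 - α)) u))) n

/-- `S` is the `α`-resolvent sequence generated by `A, α, γ, lam` (Definition 3.1):
`S(−i) = 0` for `i = 1,…,lam`; `S(0) = S(1) = S(2) = I`; and for all `n ∈ ℕ`,
`S(n+3) − 2S(n+2) + S(n+1) = A∘(k^{α−2}*S)(n) + γ·(k^{α−2}*S^λ)(n)
 + k^{α−2}(n+3)I + (1−α)k^{α−2}(n+2)I + ((α−1)(α−2)/2)k^{α−2}(n+1)I`,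
where `S^λ(n) = S(n−lam)`. -/
def IsResolvent {X : Type*} [NormedAddCommGroup X] [NormedSpace ℂ X]
    (A : X →L[ℂ] X) (α : ℝ) (γ : ℝ) (lam : ℕ) (S : ℤ → X →L[ℂ] X) : Prop :=
  (∀ i : ℕ, 1 ≤ i → i ≤ lam → S (-(i : ℤ)) = 0) ∧
  S 0 = 1 ∧ S 1 = 1 ∧ S 2 = 1 ∧
  ∀ n : ℕ, S ((n : ℤ) + 3) - 2 • S ((n : ℤ) + 2) + S ((n : ℤ) + 1) =
    A.comp (conv (kker (α - 2)) (fun m : ℕ => S (m : ℤ)) n)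
    + γ • conv (kker (α - 2)) (fun m : ℕ => S ((m : ℤ) - (lam : ℤ))) n
    + kker (α - 2) (n + 3) • (1 : X →L[ℂ] X)
    + ((1 - α) * kker (α - 2) (n + 2)) • (1 : X →L[ℂ] X)
    + ((α - 1) * (α - 2) / 2 * kker (α - 2) (n + 1)) • (1 : X →L[ℂ] X)

/-- The scalar sequence `h_α` of Definition 3.7: `h_α(0) = 1`, `h_α(1) = α−1`,
`h_α(2) = α(α−1)/2`, and
`h_α(n+3) + (1−α)h_α(n+2) + ((α−1)(α−2)/2)h_α(n+1) = 0` for `n ∈ ℕ`. -/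
noncomputable def hseq (α : ℝ) : ℕ → ℝ
  | 0 => 1
  | 1 => α - 1
  | 2 => α * (α - 1) / 2
  | n + 3 => (α - 1) * hseq α (n + 2) - ((α - 1) * (α - 2) / 2) * hseq α (n + 1)

lemma kker_zero {β : ℝ} (hβ : 0 < β) : kker β 0 = 1 := by
  simp [kker, Real.Gamma_one, (Real.Gamma_pos_of_pos hβ).ne']

lemma kker_succ {β : ℝ} (hβ : 0 < β) (m : ℕ) :
    kker β (m + 1) = kker β m * ((β + m) / (m + 1)) := by
  have h1 : Real.Gamma (β + (m + 1 : ℕ)) = (β + m) * Real.Gamma (β + m) := by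
    push_cast
    rw [show β + ((m : ℝ) + 1) = (β + m) + 1 by ring,
      Real.Gamma_add_one (by positivity)]
  have h2 : Real.Gamma ((m + 1 : ℕ) + 1) = (m + 1) * Real.Gamma ((m : ℕ) + 1) := by
    push_cast
    rw [show (m : ℝ) + 1 + 1 = ((m:ℝ) + 1) + 1 by ring,
      Real.Gamma_add_one (by positivity)]
  have hG : Real.Gamma ((m : ℕ) + 1) ≠ 0 := by
    have : (0:ℝ) < (m:ℝ) + 1 := by positivity
    exact (Real.Gamma_pos_of_pos this).ne'
  have hm1 : ((m:ℝ) + 1) ≠ 0 := by positivity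
  rw [kker, kker, h1, h2]
  field_simp

lemma kker_mul_succ {β : ℝ} (hβ : 0 < β) (m : ℕ) :
    ((m : ℝ) + 1) * kker β (m + 1) = (β + m) * kker β m := by
  rw [kker_succ hβ m]
  field_simp

lemma kker_one (n : ℕ) : kker 1 n = 1 := by
  induction n with
  | zero => exact kker_zero one_pos
  | succ m ih =>
      rw [kker_succ one_pos m, ih]
      have : ((m:ℝ) + 1) ≠ 0 := by positivity
      field_simp
      ring

/-- Chu–Vandermonde for the kernels. -/
lemma conv_kker {β δ : ℝ} (hβ : 0 < β) (hδ : 0 < δ) (n : ℕ) :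
    conv (kker β) (kker δ) n = kker (β + δ) n := by
  induction n with
  | zero => simp [conv, kker_zero hβ, kker_zero hδ, kker_zero (by positivity : (0:ℝ) < β + δ)]
  | succ n ih =>
    have key : ((n:ℝ) + 1) * conv (kker β) (kker δ) (n+1)
        = (β + δ + n) * conv (kker β) (kker δ) n := by
      have expand : ((n:ℝ) + 1) * conv (kker β) (kker δ) (n+1)
          = (∑ j ∈ Finset.range (n+2), ((n+1-j : ℕ) : ℝ) * kker β (n+1-j) * kker δ j)
          + (∑ j ∈ Finset.range (n+2), (j : ℝ) * kker β (n+1-j) * kker δ j) := by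
        rw [conv, Finset.mul_sum, ← Finset.sum_add_distrib]
        refine Finset.sum_congr rfl fun j hj => ?_
        have hj' : j ≤ n + 1 := Nat.lt_succ_iff.mp (Finset.mem_range.mp hj)
        have : ((n+1-j : ℕ) : ℝ) = (n:ℝ) + 1 - j := by
          push_cast [Nat.cast_sub hj']; ring
        rw [this, smul_eq_mul]
        ring
      have sum1 : (∑ j ∈ Finset.range (n+2), ((n+1-j : ℕ) : ℝ) * kker β (n+1-j) * kker δ j)
          = ∑ j ∈ Finset.range (n+1), (β + ((n-j : ℕ) : ℝ)) * kker β (n-j) * kker δ j := by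
        rw [Finset.sum_range_succ]
        simp only [Nat.sub_self, Nat.cast_zero, zero_mul]
        rw [add_zero]
        refine Finset.sum_congr rfl fun j hj => ?_
        have hj' : j ≤ n := Nat.lt_succ_iff.mp (Finset.mem_range.mp hj)
        have h1 : n + 1 - j = (n - j) + 1 := by omega
        rw [h1, Nat.cast_add, Nat.cast_one, kker_mul_succ hβ (n - j)]
      have sum2 : (∑ j ∈ Finset.range (n+2), (j : ℝ) * kker β (n+1-j) * kker δ j)
          = ∑ j ∈ Finset.range (n+1), (δ + ((j : ℕ) : ℝ)) * kker β (n-j) * kker δ j := by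
        rw [Finset.sum_range_succ']
        simp only [Nat.cast_zero, zero_mul, mul_zero, add_zero]
        refine Finset.sum_congr rfl fun j hj => ?_
        have h1 : n + 1 - (j + 1) = n - j := by omega
        rw [h1]
        push_cast
        have := kker_mul_succ hδ j
        calc ((j:ℝ) + 1) * kker β (n-j) * kker δ (j+1)
            = kker β (n-j) * (((j:ℝ)+1) * kker δ (j+1)) := by ring
          _ = kker β (n-j) * ((δ + j) * kker δ j) := by rw [this]
          _ = (δ + (j:ℝ)) * kker β (n-j) * kker δ j := by ring
      rw [expand, sum1, sum2, ← Finset.sum_add_distrib, conv, Finset.mul_sum]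
      refine Finset.sum_congr rfl fun j hj => ?_
      have hj' : j ≤ n := Nat.lt_succ_iff.mp (Finset.mem_range.mp hj)
      rw [smul_eq_mul, Nat.cast_sub hj']
      ring
    have h2 := kker_mul_succ (by positivity : (0:ℝ) < β + δ) n
    have hpos : ((n:ℝ) + 1) ≠ 0 := by positivity
    have : ((n:ℝ) + 1) * conv (kker β) (kker δ) (n+1) = ((n:ℝ)+1) * kker (β + δ) (n+1) := by
      rw [key, ih, show β + δ + (n:ℝ) = (β + δ) + n by ring, ← h2]
    exact mul_left_cancel₀ hpos this

open PowerSeries Finset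

set_option linter.unusedSectionVars false

/-- conv with arguments flipped. -/
lemma conv_flip {R M : Type*} [Semiring R] [AddCommMonoid M] [Module R M]
    (a : ℕ → R) (g : ℕ → M) (n : ℕ) :
    conv a g n = ∑ j ∈ Finset.range (n + 1), a j • g (n - j) := by
  rw [conv, ← Finset.sum_range_reflect]
  refine Finset.sum_congr rfl fun j hj => ?_
  have hj' : j ≤ n := Nat.lt_succ_iff.mp (Finset.mem_range.mp hj)
  have h1 : n + 1 - 1 - j = n - j := by omega
  have h2 : n - (n - j) = j := by omega
  rw [h1, h2]

section Bridge
variable {B : Type*} [Ring B] [Module ℝ B] [SMulCommClass ℝ B B] [IsScalarTower ℝ B B]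

/-- scalar sequence as power series over `B`. -/
noncomputable def Fs (a : ℕ → ℝ) : PowerSeries B := PowerSeries.mk (fun n => a n • (1 : B))

/-- vector sequence as power series. -/
noncomputable def Fv (g : ℕ → B) : PowerSeries B := PowerSeries.mk g

@[simp] lemma coeff_Fv (g : ℕ → B) (n : ℕ) : coeff (R := B) n (Fv g) = g n := coeff_mk n g
@[simp] lemma coeff_Fs (a : ℕ → ℝ) (n : ℕ) : coeff (R := B) n (Fs a : PowerSeries B) = a n • 1 :=
  coeff_mk n _

lemma Fv_injective : Function.Injective (Fv (B := B)) := fun g₁ g₂ h => by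
  funext n
  have := congrArg (coeff (R := B) n) h
  simpa using this

lemma Fv_add (g₁ g₂ : ℕ → B) : Fv (fun n => g₁ n + g₂ n) = Fv g₁ + Fv g₂ := by
  ext n; simp

lemma Fs_mul_Fv (a : ℕ → ℝ) (g : ℕ → B) : (Fs a : PowerSeries B) * Fv g = Fv (conv a g) := by
  ext n
  simp only [coeff_Fv, PowerSeries.coeff_mul,
    Finset.Nat.sum_antidiagonal_eq_sum_range_succ_mk, coeff_Fs, conv_flip,
    smul_mul_assoc, one_mul]

lemma Fs_mul_Fs (a b : ℕ → ℝ) :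
    (Fs a : PowerSeries B) * Fs b = Fs (conv a b) := by
  ext n
  simp only [PowerSeries.coeff_mul, Finset.Nat.sum_antidiagonal_eq_sum_range_succ_mk,
    coeff_Fs, conv_flip, Finset.sum_smul, smul_mul_assoc, one_mul, smul_smul, smul_eq_mul]

/-- scalar series are central. -/
lemma Fs_comm (a : ℕ → ℝ) (M : PowerSeries B) : (Fs a) * M = M * Fs a := by
  ext n
  simp only [PowerSeries.coeff_mul, Finset.Nat.sum_antidiagonal_eq_sum_range_succ_mk,
    coeff_Fs, smul_mul_assoc, one_mul, mul_smul_comm, mul_one]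
  rw [← Finset.sum_range_reflect]
  refine Finset.sum_congr rfl fun j hj => ?_
  have hj' : j ≤ n := Nat.lt_succ_iff.mp (Finset.mem_range.mp hj)
  have h1 : n + 1 - 1 - j = n - j := by omega
  have h2 : n - (n - j) = j := by omega
  rw [h1, h2]

lemma conv_assoc (a b : ℕ → ℝ) (g : ℕ → B) :
    conv a (conv b g) = conv (conv a b) g := by
  apply Fv_injective
  rw [← Fs_mul_Fv, ← Fs_mul_Fv, ← Fs_mul_Fv, ← Fs_mul_Fs, mul_assoc]

lemma conv_comm (a b : ℕ → ℝ) : conv a b = conv b a := by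
  have : (Fs (conv a b) : PowerSeries ℝ) = Fs (conv b a) := by
    rw [← Fs_mul_Fs, ← Fs_mul_Fs, Fs_comm]
  funext n
  have := congrArg (coeff (R := ℝ) n) this
  simpa using this

lemma conv_mulA (A : B) (a : ℕ → ℝ) (g : ℕ → B) (n : ℕ) :
    conv a (fun m => A * g m) n = A * conv a g n := by
  rw [conv, conv, Finset.mul_sum]
  exact Finset.sum_congr rfl fun j hj => (mul_smul_comm _ _ _).symm

lemma conv_smul (c : ℝ) (a : ℕ → ℝ) (g : ℕ → B) (n : ℕ) :
    conv a (fun m => c • g m) n = c • conv a g n := by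
  rw [conv, conv, Finset.smul_sum]
  exact Finset.sum_congr rfl fun j hj => smul_comm _ _ _

/-- coefficients of `(1 - X) * M`. -/
lemma coeff_D_zero (M : PowerSeries B) : coeff (R := B) 0 ((1 - X) * M) = coeff (R := B) 0 M := by
  rw [sub_mul, one_mul, map_sub, PowerSeries.coeff_zero_X_mul, sub_zero]

lemma coeff_D_succ (M : PowerSeries B) (n : ℕ) :
    coeff (R := B) (n + 1) ((1 - X) * M) = coeff (R := B) (n + 1) M - coeff (R := B) n M := by
  rw [sub_mul, one_mul, map_sub, PowerSeries.coeff_succ_X_mul]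

lemma X3_mul (M : PowerSeries B) (n : ℕ) :
    coeff (R := B) (n + 3) (X ^ 3 * M) = coeff (R := B) n M := by
  have := PowerSeries.coeff_X_pow_mul M 3 n
  simpa [add_comm] using this

lemma X3_mul_low (M : PowerSeries B) (m : ℕ) (hm : m < 3) :
    coeff (R := B) m (X ^ 3 * M) = 0 := by
  have h3 : (X : PowerSeries B) ^ 3 * M = X * (X * (X * M)) := by
    rw [pow_succ, pow_two, mul_assoc, mul_assoc]
  rw [h3]
  interval_cases m
  · rw [PowerSeries.coeff_zero_X_mul]
  · rw [PowerSeries.coeff_succ_X_mul, PowerSeries.coeff_zero_X_mul]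
  · rw [PowerSeries.coeff_succ_X_mul, PowerSeries.coeff_succ_X_mul,
      PowerSeries.coeff_zero_X_mul]

end Bridge

/-- characteristic polynomial coefficients -/
noncomputable def pseq (α : ℝ) : ℕ → ℝ := fun n =>
  if n = 0 then 1 else if n = 1 then 1 - α else if n = 2 then (α - 1) * (α - 2) / 2 else 0

lemma conv_pseq3 (α : ℝ) (c : ℕ → ℝ) (m : ℕ) :
    conv c (pseq α) (m + 1 + 1 + 1) =
      c (m + 1 + 1 + 1) + (1 - α) * c (m + 1 + 1) + ((α - 1) * (α - 2) / 2) * c (m + 1) := by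
  rw [conv]
  have hsub : Finset.range 3 ⊆ Finset.range (m + 1 + 1 + 1 + 1) := by
    intro x hx; simp only [Finset.mem_range] at hx ⊢; omega
  have hzero : ∀ j ∈ Finset.range (m + 1 + 1 + 1 + 1), j ∉ Finset.range 3 →
      c (m + 1 + 1 + 1 - j) • pseq α j = 0 := by
    intro j _ hj
    simp only [Finset.mem_range, not_lt] at hj
    simp [pseq, show j ≠ 0 by omega, show j ≠ 1 by omega, show j ≠ 2 by omega]
  rw [← Finset.sum_subset hsub hzero]
  rw [show (3:ℕ) = 2 + 1 from rfl, Finset.sum_range_succ, Finset.sum_range_succ,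
    Finset.sum_range_one]
  rw [show m + 1 + 1 + 1 - 2 = m + 1 from by omega, show m + 1 + 1 + 1 - 1 = m + 1 + 1 from by omega]
  simp only [Nat.sub_zero, pseq, smul_eq_mul]
  norm_num
  ring

lemma conv_hseq_pseq (α : ℝ) :
    conv (hseq α) (pseq α) = fun n => if n = 0 then (1:ℝ) else 0 := by
  funext n
  rcases n with (_|_|_|m)
  · simp [conv, pseq, hseq]
  · simp only [show ¬((1:ℕ) = 0) from by omega, if_false]
    rw [conv, Finset.sum_range_succ, Finset.sum_range_one]
    simp [pseq, hseq]
  · simp only [show ¬((2:ℕ) = 0) from by omega, if_false]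
    rw [conv, Finset.sum_range_succ, Finset.sum_range_succ, Finset.sum_range_one]
    simp [pseq, hseq]
    ring
  · simp only [show ¬(m + 1 + 1 + 1 = 0) from by omega, if_false]
    rw [conv_pseq3]
    have hrec : hseq α (m + 1 + 1 + 1)
        = (α - 1) * hseq α (m + 1 + 1) - ((α - 1) * (α - 2) / 2) * hseq α (m + 1) := rfl
    rw [hrec]; ring

section Bridge2
variable {B : Type*} [Ring B] [Module ℝ B] [SMulCommClass ℝ B B] [IsScalarTower ℝ B B]
open PowerSeries

lemma Fs_delta : (Fs (fun n => if n = 0 then (1:ℝ) else 0) : PowerSeries B) = 1 := by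
  ext n
  rw [coeff_Fs, PowerSeries.coeff_one]
  split <;> simp

lemma D_mul_ones : ((1 - X : PowerSeries B)) * Fs (fun _ => (1:ℝ)) = 1 := by
  ext n
  rcases n with (_|n)
  · rw [coeff_D_zero, coeff_Fs, PowerSeries.coeff_one]; simp
  · rw [coeff_D_succ, coeff_Fs, coeff_Fs, PowerSeries.coeff_one]; simp

lemma swapD (a : ℕ → ℝ) (M : PowerSeries B) :
    (Fs a : PowerSeries B) * ((1 - X) * M) = (1 - X) * (Fs a * M) := by
  rw [← mul_assoc, Fs_comm a (1 - X), mul_assoc]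

lemma swapX (a : ℕ → ℝ) (M : PowerSeries B) :
    (Fs a : PowerSeries B) * (X * M) = X * (Fs a * M) := by
  rw [← mul_assoc, Fs_comm a X, mul_assoc]

lemma swapDX (M : PowerSeries B) :
    ((1 - X : PowerSeries B)) * (X * M) = X * ((1 - X) * M) := by
  rw [← mul_assoc, ← mul_assoc, sub_mul, mul_sub, one_mul, mul_one, (PowerSeries.commute_X X).eq]

lemma conv_combo (a : ℕ → ℝ) (A : B) (c : ℝ) (u v : ℕ → B) (n : ℕ) :
    conv a (fun m => A * u m + c • v m) n = A * conv a u n + c • conv a v n := by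
  simp only [conv, smul_add, Finset.sum_add_distrib, Finset.mul_sum, Finset.smul_sum]
  congr 1
  · exact Finset.sum_congr rfl fun j _ => (mul_smul_comm _ _ _).symm
  · exact Finset.sum_congr rfl fun j _ => smul_comm _ _ _

open PowerSeries in
lemma G_of_E (Kq Hh Pp Qq : ℕ → ℝ) (s r r' : ℕ → B)
    (E : (1 - X) * ((1 - X) * Fv s) = X * (X * (X * Fv r)) + Fs (conv Kq Pp))
    (hQK : ((1 - X : PowerSeries B)) * ((Fs Qq : PowerSeries B) * Fs Kq) = 1)
    (hHP : (Fs Hh : PowerSeries B) * Fs Pp = 1)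
    (hr : conv Hh r = conv Kq r') :
    ((1 - X : PowerSeries B)) * ((1 - X) * ((1 - X) * Fv (conv Qq (conv Hh s))))
      = X * (X * (X * Fv r')) + 1 := by
  calc ((1 - X : PowerSeries B)) * ((1 - X) * ((1 - X) * Fv (conv Qq (conv Hh s))))
      = (1 - X) * (Fs Qq * (Fs Hh * ((1 - X) * ((1 - X) * Fv s)))) := by
        rw [← Fs_mul_Fv, ← Fs_mul_Fv]
        simp only [swapD]
    _ = (1 - X) * (Fs Qq * (Fs Hh * (X * (X * (X * Fv r)) + Fs (conv Kq Pp)))) := by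
        rw [E]
    _ = X * (X * (X * ((1 - X) * (Fs Qq * (Fs Hh * Fv r)))))
        + (1 - X) * (Fs Qq * (Fs Hh * Fs (conv Kq Pp))) := by
        rw [mul_add, mul_add, mul_add]
        simp only [swapX, swapDX]
    _ = X * (X * (X * Fv r')) + 1 := by
        congr 1
        · congr 3
          rw [Fs_mul_Fv Hh r, hr, ← Fs_mul_Fv Kq r',
            ← mul_assoc (Fs Qq) (Fs Kq) (Fv r'), ← mul_assoc, hQK, one_mul]
        · rw [← Fs_mul_Fs Kq Pp, ← mul_assoc (Fs Hh) (Fs Kq) (Fs Pp), Fs_comm Hh (Fs Kq),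
            mul_assoc (Fs Kq) (Fs Hh) (Fs Pp), hHP, mul_one, hQK]

open PowerSeries in
lemma coeff_extract (w r' : ℕ → B)
    (G : ((1 - X : PowerSeries B)) * ((1 - X) * ((1 - X) * Fv w))
      = X * (X * (X * Fv r')) + 1) (n : ℕ) :
    w (n+1+1+1) - w (n+1+1) - (w (n+1+1) - w (n+1))
      - (w (n+1+1) - w (n+1) - (w (n+1) - w n)) = r' n := by
  have c3 := congrArg (coeff (R := B) (n+1+1+1)) G
  rw [map_add, coeff_D_succ, coeff_D_succ, coeff_D_succ, coeff_D_succ, coeff_D_succ,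
    coeff_D_succ, PowerSeries.coeff_succ_X_mul, PowerSeries.coeff_succ_X_mul,
    PowerSeries.coeff_succ_X_mul, PowerSeries.coeff_one,
    if_neg (by omega : ¬(n + 1 + 1 + 1 = 0)), add_zero, coeff_D_succ] at c3
  simp only [coeff_Fv] at c3
  exact c3

end Bridge2

/-- Equation (3.15): if `S` is the `α`-resolvent sequence generated by
`A, α, γ, lam` and `h_α` is the scalar sequence of Definition 3.7, then
`Δ^α(h_α * S)(n) = A∘(h_α * S)(n) + γ·(h_α * S^λ)(n)` for every `n ∈ ℕ`,
where `S^λ(n) = S(n−lam)`. -/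
theorem fracDiff_hconv_resolvent {X : Type*} [NormedAddCommGroup X] [NormedSpace ℂ X]
    (A : X →L[ℂ] X) (α : ℝ) (hα1 : 2 < α) (hα2 : α < 3) (γ : ℝ)
    (lam : ℕ) (hlam : 0 < lam) (S : ℤ → X →L[ℂ] X)
    (hS : IsResolvent A α γ lam S) :
    ∀ n : ℕ,
      fracDiff α (conv (hseq α) (fun m : ℕ => S (m : ℤ))) n =
        A.comp (conv (hseq α) (fun m : ℕ => S (m : ℤ)) n)
          + γ • conv (hseq α) (fun m : ℕ => S ((m : ℤ) - (lam : ℤ))) n := by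
  obtain ⟨-, hS0, hS1, hS2, hrec⟩ := hS
  intro n
  have hK : (0:ℝ) < α - 2 := by linarith
  have hQ : (0:ℝ) < 3 - α := by linarith
  have hK0 : kker (α - 2) 0 = 1 := kker_zero hK
  have hK1 : kker (α - 2) 1 = α - 2 := by
    have h := kker_succ hK 0
    rw [kker_zero hK] at h
    norm_num at h
    rw [h]
  have hK2 : kker (α - 2) 2 = (α - 2) * (α - 1) / 2 := by
    have h := kker_succ hK 1
    rw [hK1] at h
    norm_num at h
    rw [h]; ring
  have hsv : ∀ k : ℕ, (fun m : ℕ => S (m : ℤ)) k = S (k : ℤ) := fun _ => rfl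
  have hslv : ∀ k : ℕ, (fun m : ℕ => S ((m : ℤ) - (lam : ℤ))) k = S ((k : ℤ) - (lam : ℤ)) :=
    fun _ => rfl
  -- the resolvent equation as a power-series identity
  have E : ((1 - PowerSeries.X : PowerSeries (X →L[ℂ] X)))
        * ((1 - PowerSeries.X) * Fv (fun m : ℕ => S (m : ℤ)))
      = PowerSeries.X * (PowerSeries.X * (PowerSeries.X *
          Fv (fun m : ℕ => A * conv (kker (α - 2)) (fun m : ℕ => S (m : ℤ)) m
            + γ • conv (kker (α - 2)) (fun m : ℕ => S ((m : ℤ) - (lam : ℤ))) m)))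
        + Fs (conv (kker (α - 2)) (pseq α)) := by
    apply PowerSeries.ext
    intro m
    rcases m with (_|_|_|m)
    · rw [coeff_D_zero, coeff_D_zero, coeff_Fv, map_add, PowerSeries.coeff_zero_X_mul,
        coeff_Fs]
      have hc : conv (kker (α - 2)) (pseq α) 0 = 1 := by
        rw [conv, Finset.sum_range_one]
        simp [pseq, hK0]
      rw [hc]
      norm_cast
      rw [hS0]
      simp
    · show (PowerSeries.coeff (0+1)) _ = (PowerSeries.coeff (0+1)) _
      rw [coeff_D_succ, coeff_D_succ, coeff_D_zero, coeff_Fv, coeff_Fv, map_add,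
        PowerSeries.coeff_succ_X_mul, PowerSeries.coeff_zero_X_mul, coeff_Fs]
      have hc : conv (kker (α - 2)) (pseq α) (0+1) = -1 := by
        rw [conv, Finset.sum_range_succ, Finset.sum_range_one]
        simp [pseq, hK0, hK1]
        ring
      rw [hc]
      simp only [zero_add, Nat.cast_one, Nat.cast_zero, hS0, hS1, neg_smul, one_smul]
      abel
    · show (PowerSeries.coeff (0+1+1)) _ = (PowerSeries.coeff (0+1+1)) _
      rw [coeff_D_succ, coeff_D_succ, coeff_D_succ, coeff_Fv, coeff_Fv,
        coeff_Fv, map_add, PowerSeries.coeff_succ_X_mul, PowerSeries.coeff_succ_X_mul,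
        PowerSeries.coeff_zero_X_mul, coeff_Fs]
      have hc : conv (kker (α - 2)) (pseq α) (0+1+1) = 0 := by
        rw [conv, Finset.sum_range_succ, Finset.sum_range_succ, Finset.sum_range_one]
        simp [pseq, hK0, hK1, hK2]
        ring
      rw [hc]
      norm_num [hS0, hS1, hS2]
    · rw [coeff_D_succ, coeff_D_succ, coeff_D_succ, coeff_Fv, coeff_Fv, coeff_Fv, map_add,
        PowerSeries.coeff_succ_X_mul, PowerSeries.coeff_succ_X_mul,
        PowerSeries.coeff_succ_X_mul, coeff_Fv, coeff_Fs, conv_pseq3]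
      have hr := hrec m
      have e3 : ((m + 1 + 1 + 1 : ℕ) : ℤ) = (m : ℤ) + 3 := by push_cast; ring
      have e2 : ((m + 1 + 1 : ℕ) : ℤ) = (m : ℤ) + 2 := by push_cast; ring
      have e1 : ((m + 1 : ℕ) : ℤ) = (m : ℤ) + 1 := by push_cast; ring
      simp only [e3, e2, e1]
      rw [show S ((m:ℤ)+3) - S ((m:ℤ)+2) - (S ((m:ℤ)+2) - S ((m:ℤ)+1))
          = S ((m:ℤ)+3) - 2 • S ((m:ℤ)+2) + S ((m:ℤ)+1) from by
        rw [two_smul]; abel]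
      rw [hr, ContinuousLinearMap.mul_def]
      rw [show (m + 3 : ℕ) = m + 1 + 1 + 1 from rfl, show (m + 2 : ℕ) = m + 1 + 1 from rfl]
      rw [add_smul, add_smul]
      abel
  -- key scalar identities
  have hDQK : ((1 - PowerSeries.X : PowerSeries (X →L[ℂ] X)))
      * (Fs (kker (3 - α)) * Fs (kker (α - 2))) = 1 := by
    have hqk : conv (kker (3 - α)) (kker (α - 2)) = (fun _ : ℕ => (1:ℝ)) := by
      funext m
      rw [conv_kker hQ hK, show (3 - α) + (α - 2) = 1 by ring, kker_one]
    rw [Fs_mul_Fs, hqk]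
    exact D_mul_ones
  have hHP : (Fs (hseq α) : PowerSeries (X →L[ℂ] X)) * Fs (pseq α) = 1 := by
    rw [Fs_mul_Fs, conv_hseq_pseq]; exact Fs_delta
  have hr : conv (hseq α)
        (fun m : ℕ => A * conv (kker (α - 2)) (fun m : ℕ => S (m : ℤ)) m
          + γ • conv (kker (α - 2)) (fun m : ℕ => S ((m : ℤ) - (lam : ℤ))) m)
      = conv (kker (α - 2))
        (fun m : ℕ => A * conv (hseq α) (fun m : ℕ => S (m : ℤ)) m
          + γ • conv (hseq α) (fun m : ℕ => S ((m : ℤ) - (lam : ℤ))) m) := by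
    funext j
    rw [conv_combo, conv_combo]
    have swap1 : conv (hseq α) (conv (kker (α - 2)) (fun m : ℕ => S (m : ℤ)))
        = conv (kker (α - 2)) (conv (hseq α) (fun m : ℕ => S (m : ℤ))) := by
      rw [conv_assoc, conv_comm, ← conv_assoc]
    have swap2 : conv (hseq α) (conv (kker (α - 2)) (fun m : ℕ => S ((m : ℤ) - (lam : ℤ))))
        = conv (kker (α - 2)) (conv (hseq α) (fun m : ℕ => S ((m : ℤ) - (lam : ℤ)))) := by
      rw [conv_assoc, conv_comm, ← conv_assoc]
    rw [swap1, swap2]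
  have G := G_of_E (kker (α - 2)) (hseq α) (pseq α) (kker (3 - α))
    (fun m : ℕ => S (m : ℤ))
    (fun m : ℕ => A * conv (kker (α - 2)) (fun m : ℕ => S (m : ℤ)) m
      + γ • conv (kker (α - 2)) (fun m : ℕ => S ((m : ℤ) - (lam : ℤ))) m)
    (fun m : ℕ => A * conv (hseq α) (fun m : ℕ => S (m : ℤ)) m
      + γ • conv (hseq α) (fun m : ℕ => S ((m : ℤ) - (lam : ℤ))) m)
    E hDQK hHP hr
  have ext := coeff_extract _ _ G n
  simp only [fracDiff, fdiff]
  rw [← ContinuousLinearMap.mul_def]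
  exact ext
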